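/- Let X, Y, Z be pairwise disjoint finite sets and let E ⊆ X × Y × Z be a finite set of triples. Define a graph G as follows: the vertex set is {v_e : e ∈ E} ∪ {(e,u) : e ∈ E, u a component of e}, and for each e = (x,y,z) ∈ E the edges are the three pairs {v_e, (e,x)}, {v_e, (e,y)}, {v_e, (e,z)} (so G is a disjoint union of stars). For each u ∈ X ∪ Y ∪ Z let P_u = {(e,u) : e ∈ E, u a component of e}. Then the following are equivalent: (1) there exists S ⊆ V(G) such that |S ∩ P_u| = 1 for every u ∈ X ∪ Y ∪ Z and every edge of G has exactly one endpoint in S; (2) there exists M ⊆ E such that every element of X ∪ Y ∪ Z is a component of exactly one triple in M (i.e., M is a perfect 3-dimensional matching). (Correctness of the reduction in Theorem 1.4.) -/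
import Mathlib


open Finset

/-- `u` is a component of the triple `e = (x, y, z)`. -/
def IsComp {X Y Z : Type*} (e : X × Y × Z) (u : X ⊕ Y ⊕ Z) : Prop :=
  u = Sum.inl e.1 ∨ u = Sum.inr (Sum.inl e.2.1) ∨ u = Sum.inr (Sum.inr e.2.2)

instance {X Y Z : Type*} [DecidableEq X] [DecidableEq Y] [DecidableEq Z]
    (e : X × Y × Z) : DecidablePred (IsComp e) := fun _ => by
  unfold IsComp; infer_instance

section

variable {X Y Z : Type*} [Fintype X] [Fintype Y] [Fintype Z]
  [DecidableEq X] [DecidableEq Y] [DecidableEq Z]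

/-- The vertex type of the reduction graph: centers `v_e` (left) and leaves `(e, u)`
(right). -/
abbrev RedVtx (X Y Z : Type*) := (X × Y × Z) ⊕ ((X × Y × Z) × (X ⊕ Y ⊕ Z))

/-- The vertex set of the reduction graph `G`: a center `v_e` for each triple `e ∈ E`
and a leaf `(e, u)` for each `e ∈ E` and each component `u` of `e`. -/
def redVertexSet (E : Finset (X × Y × Z)) : Finset (RedVtx X Y Z) :=
  E.image Sum.inl ∪
    E.biUnion fun e => (Finset.univ.filter (IsComp e)).image fun u => Sum.inr (e, u)

/-- The part `P_u = {(e, u) : e ∈ E, u a component of e}` of the partition. -/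
def redPart (E : Finset (X × Y × Z)) (u : X ⊕ Y ⊕ Z) : Finset (RedVtx X Y Z) :=
  (E.filter fun e => IsComp e u).image fun e => Sum.inr (e, u)

/-- Correctness of the reduction in Theorem 1.4: there is a set `S` of vertices of the
star-union graph `G` meeting each part `P_u` in exactly one vertex and cutting every edge
of `G` (each edge `{v_e, (e,u)}`, `e ∈ E`, `u` a component of `e`, has exactly one
endpoint in `S`) iff `E` admits a perfect 3-dimensional matching. -/
theorem reduction_correct (E : Finset (X × Y × Z)) :
    (∃ S : Finset (RedVtx X Y Z), S ⊆ redVertexSet E ∧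
        (∀ u : X ⊕ Y ⊕ Z, (S ∩ redPart E u).card = 1) ∧
        (∀ e ∈ E, ∀ u : X ⊕ Y ⊕ Z, IsComp e u →
          Xor' (Sum.inl e ∈ S) (Sum.inr (e, u) ∈ S))) ↔
      (∃ M ⊆ E, ∀ u : X ⊕ Y ⊕ Z, ∃! e, e ∈ M ∧ IsComp e u) := by
  classical
  constructor
  · rintro ⟨S, hSsub, hcard, hxor⟩
    refine ⟨E.filter (fun e => Sum.inl e ∉ S), Finset.filter_subset _ _, ?_⟩
    intro u
    obtain ⟨v, hv⟩ := Finset.card_eq_one.mp (hcard u)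
    have hvmem : v ∈ S ∩ redPart E u := hv ▸ Finset.mem_singleton_self v
    rw [Finset.mem_inter] at hvmem
    obtain ⟨hvS, hvP⟩ := hvmem
    simp only [redPart, Finset.mem_image, Finset.mem_filter] at hvP
    obtain ⟨e, ⟨heE, hec⟩, rfl⟩ := hvP
    refine ⟨e, ⟨Finset.mem_filter.mpr ⟨heE, ?_⟩, hec⟩, ?_⟩
    · intro hinl
      rcases hxor e heE u hec with h | h
      · exact h.2 hvS
      · exact h.2 hinl
    · rintro e' ⟨he'M, he'c⟩
      rw [Finset.mem_filter] at he'M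
      have hleaf : Sum.inr (e', u) ∈ S := by
        rcases hxor e' he'M.1 u he'c with h | h
        · exact absurd h.1 he'M.2
        · exact h.1
      have hmem : (Sum.inr (e', u) : RedVtx X Y Z) ∈ S ∩ redPart E u := by
        refine Finset.mem_inter.mpr ⟨hleaf, ?_⟩
        simp only [redPart, Finset.mem_image, Finset.mem_filter]
        exact ⟨e', ⟨he'M.1, he'c⟩, rfl⟩
      rw [hv, Finset.mem_singleton] at hmem
      simpa using hmem
  · rintro ⟨M, hME, hM⟩
    refine ⟨(E \ M).image Sum.inl ∪
        M.biUnion (fun e => (Finset.univ.filter (IsComp e)).image fun u => Sum.inr (e, u)),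
        ?_, ?_, ?_⟩
    · exact Finset.union_subset_union
        (Finset.image_subset_image (Finset.sdiff_subset))
        (Finset.biUnion_subset_biUnion_of_subset_left _ hME)
    · intro u
      obtain ⟨e₀, ⟨he₀M, he₀c⟩, huniq⟩ := hM u
      rw [Finset.card_eq_one]
      refine ⟨Sum.inr (e₀, u), ?_⟩
      ext v
      simp only [Finset.mem_inter, Finset.mem_singleton, Finset.mem_union, Finset.mem_image,
        Finset.mem_biUnion, Finset.mem_filter, Finset.mem_univ, redPart, true_and]
      constructor
      · rintro ⟨hvS, e, ⟨heE, hec⟩, rfl⟩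
        rcases hvS with ⟨e', _, h⟩ | ⟨e', he'M, u', hu'c, h⟩
        · exact absurd h (by simp)
        · simp only [Sum.inr.injEq, Prod.mk.injEq] at h
          obtain ⟨rfl, rfl⟩ := h
          rw [huniq e' ⟨he'M, hec⟩]
      · rintro rfl
        refine ⟨Or.inr ⟨e₀, he₀M, u, he₀c, rfl⟩, e₀, ⟨hME he₀M, he₀c⟩, rfl⟩
    · intro e heE u hec
      by_cases heM : e ∈ M
      · refine Or.inr ⟨?_, ?_⟩
        · simp only [Finset.mem_union, Finset.mem_biUnion, Finset.mem_image, Finset.mem_filter,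
            Finset.mem_univ, true_and]
          exact Or.inr ⟨e, heM, u, hec, rfl⟩
        · intro hS
          rcases Finset.mem_union.mp hS with h | h
          · simp only [Finset.mem_image, Finset.mem_sdiff] at h
            obtain ⟨e', he', h⟩ := h
            simp only [Sum.inl.injEq] at h
            exact he'.2 (h ▸ heM)
          · simp at h
      · refine Or.inl ⟨?_, ?_⟩
        · exact Finset.mem_union_left _ (Finset.mem_image_of_mem _
            (Finset.mem_sdiff.mpr ⟨heE, heM⟩))
        · intro hS
          rcases Finset.mem_union.mp hS with h | h
          · simp at h
          · simp only [Finset.mem_biUnion, Finset.mem_image, Finset.mem_filter,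
              Finset.mem_univ, true_and] at h
            obtain ⟨e', he'M, u', _, h⟩ := h
            simp only [Sum.inr.injEq, Prod.mk.injEq] at h
            exact heM (h.1 ▸ he'M)

end
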